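/- arXiv:2103.06683 — 2 statements merged into one kernel-verified Lean document; each statement's English description precedes it below -/
import Mathlib

section
/- Let n ≥ 2 and for 1 ≤ ℓ ≤ n+1 define vertices of the half-grid H_n by v_1 = (1,1), v_{n+1} = (n,n), and v_ℓ = (ℓ,ℓ−1) for 2 ≤ ℓ ≤ n. Then for all 1 ≤ i < j ≤ n+1, the distance between v_i and v_j in H_n equals their distance in P_n □ P_n, and there is a shortest path in H_n from v_i to v_j that contains the vertex (i, j−1). -/
/-- `m` is a median of the triple `u, v, w` in `G`. -/
def IsMedianVtx {V : Type*} (G : SimpleGraph V) (u v w m : V) : Prop :=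
  G.dist u m + G.dist m v = G.dist u v ∧
  G.dist v m + G.dist m w = G.dist v w ∧
  G.dist u m + G.dist m w = G.dist u w

/-- A median graph: a connected graph in which every triple of vertices has a
unique median. -/
def IsMedianGraph {V : Type*} (G : SimpleGraph V) : Prop :=
  G.Connected ∧ ∀ u v w : V, ∃! m : V, IsMedianVtx G u v w m

/-- Adjacency of the infinite grid on `ℕ × ℕ`: two pairs are adjacent iff they agree
in one coordinate and differ by exactly one in the other (this is the adjacency of a
Cartesian product of paths). -/
def gridAdj (p q : ℕ × ℕ) : Prop :=
  (p.1 = q.1 ∧ (p.2 + 1 = q.2 ∨ q.2 + 1 = p.2)) ∨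
  (p.2 = q.2 ∧ (p.1 + 1 = q.1 ∨ q.1 + 1 = p.1))

/-- The grid graph on `ℕ × ℕ`. -/
def gridGraph : SimpleGraph (ℕ × ℕ) where
  Adj := gridAdj
  symm := by
    constructor
    intro p q h
    simp only [gridAdj] at h ⊢
    omega
  loopless := by
    constructor
    intro p h
    simp only [gridAdj] at h
    omega

/-- The vertex set `{1, …, n} × {1, …, n}` of `P_n □ P_n` (1-indexed). -/
def gridVert (n : ℕ) : Set (ℕ × ℕ) := {p | 1 ≤ p.1 ∧ p.1 ≤ n ∧ 1 ≤ p.2 ∧ p.2 ≤ n}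

/-- The vertex set of the half-grid `H_n`: the vertices `(i,j)` of `P_n □ P_n` with
either `i = 1` and `1 ≤ j ≤ n`, or `2 ≤ i ≤ n` and `i - 1 ≤ j ≤ n`; equivalently,
the vertices with `i ≤ j + 1`. -/
def halfVert (n : ℕ) : Set (ℕ × ℕ) := {p | p ∈ gridVert n ∧ p.1 ≤ p.2 + 1}

/-- The full grid `P_n □ P_n` (1-indexed), as an induced subgraph of `gridGraph`. -/
def fullGrid (n : ℕ) : SimpleGraph (gridVert n) := gridGraph.induce (gridVert n)

/-- The half-grid `H_n`, the subgraph of `P_n □ P_n` induced by `halfVert n`. -/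
def halfGrid (n : ℕ) : SimpleGraph (halfVert n) := gridGraph.induce (halfVert n)

/-- The distinguished vertices `v_1 = (1,1)`, `v_{n+1} = (n,n)` and `v_ℓ = (ℓ, ℓ-1)`
for `2 ≤ ℓ ≤ n` of the half-grid `H_n`. -/
def hgVert (n ℓ : ℕ) : ℕ × ℕ :=
  if ℓ = n + 1 then (n, n) else if ℓ = 1 then (1, 1) else (ℓ, ℓ - 1)

/-!
Every edge of the grid changes the ℓ¹ distance by one, so in any induced subgraph of the grid
the graph distance is at least the ℓ¹ distance, with equality as soon as the subgraph contains
a monotone lattice path between the two points. For `v_i` and `v_j` the `L`-shaped path going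
up from `v_i` to the corner `(i, j - 1)` and then right to `v_j` stays in the half-grid, so both
graphs realise the ℓ¹ distance between `v_i` and `v_j`.
-/

def l1Dist (p q : ℕ × ℕ) : ℕ := Nat.dist p.1 q.1 + Nat.dist p.2 q.2

lemma l1Dist_eq_one_of_gridAdj {p q : ℕ × ℕ} (h : gridAdj p q) : l1Dist p q = 1 := by
  simp only [gridAdj] at h
  simp only [l1Dist, Nat.dist]
  omega

lemma l1Dist_le_length {S : Set (ℕ × ℕ)} {a b : S} (w : (gridGraph.induce S).Walk a b) :
    l1Dist a b ≤ w.length := by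
  induction w with
  | nil => simp [l1Dist]
  | @cons x y z hxy w ih =>
    have hstep := l1Dist_eq_one_of_gridAdj (p := x) (q := y) hxy
    simp only [l1Dist, Nat.dist, SimpleGraph.Walk.length_cons] at hstep ih ⊢
    omega

lemma dist_eq_l1Dist_of_length_eq {S : Set (ℕ × ℕ)} {a b : S}
    (w : (gridGraph.induce S).Walk a b) (hw : w.length = l1Dist a b) :
    (gridGraph.induce S).dist a b = l1Dist a b := by
  refine le_antisymm (hw ▸ SimpleGraph.dist_le w) ?_
  obtain ⟨w', hw'⟩ := w.reachable.exists_walk_length_eq_dist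
  exact hw' ▸ l1Dist_le_length w'

lemma SimpleGraph.exists_walk_length_eq_of_adj_succ {V : Type*} {G : SimpleGraph V}
    (f : ℕ → V) (k : ℕ) (hf : ∀ t < k, G.Adj (f t) (f (t + 1))) :
    ∃ w : G.Walk (f 0) (f k), w.length = k := by
  induction k with
  | zero => exact ⟨.nil, rfl⟩
  | succ k ih =>
    obtain ⟨w, hw⟩ := ih fun t ht => hf t (by omega)
    exact ⟨w.concat (hf k (by omega)), by simp [hw]⟩

lemma exists_walk_vertical {S : Set (ℕ × ℕ)} {a c : S} (hx : a.1.1 = c.1.1)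
    (hy : a.1.2 ≤ c.1.2) (hmem : ∀ t, a.1.2 ≤ t → t ≤ c.1.2 → (a.1.1, t) ∈ S) :
    ∃ w : (gridGraph.induce S).Walk a c, w.length = l1Dist a c := by
  let f : ℕ → S := fun t ↦
    ⟨(a.1.1, a.1.2 + min t (c.1.2 - a.1.2)), hmem _ (by omega) (by omega)⟩
  have hf0 : f 0 = a := Subtype.ext (Prod.ext rfl (by simp [f]))
  have hfk : f (c.1.2 - a.1.2) = c := Subtype.ext (Prod.ext hx (by simp [f]; omega))
  obtain ⟨w, hw⟩ := SimpleGraph.exists_walk_length_eq_of_adj_succ (G := gridGraph.induce S) f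
    (c.1.2 - a.1.2) fun t ht ↦ Or.inl ⟨rfl, Or.inl (by simp [f]; omega)⟩
  refine ⟨w.copy hf0 hfk, ?_⟩
  simp only [SimpleGraph.Walk.length_copy, hw, l1Dist, Nat.dist]
  omega

lemma exists_walk_horizontal {S : Set (ℕ × ℕ)} {c b : S} (hy : c.1.2 = b.1.2)
    (hx : c.1.1 ≤ b.1.1) (hmem : ∀ t, c.1.1 ≤ t → t ≤ b.1.1 → (t, c.1.2) ∈ S) :
    ∃ w : (gridGraph.induce S).Walk c b, w.length = l1Dist c b := by
  let f : ℕ → S := fun t ↦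
    ⟨(c.1.1 + min t (b.1.1 - c.1.1), c.1.2), hmem _ (by omega) (by omega)⟩
  have hf0 : f 0 = c := Subtype.ext (Prod.ext (by simp [f]) rfl)
  have hfk : f (b.1.1 - c.1.1) = b := Subtype.ext (Prod.ext (by simp [f]; omega) hy)
  obtain ⟨w, hw⟩ := SimpleGraph.exists_walk_length_eq_of_adj_succ (G := gridGraph.induce S) f
    (b.1.1 - c.1.1) fun t ht ↦ Or.inr ⟨rfl, Or.inl (by simp [f]; omega)⟩
  refine ⟨w.copy hf0 hfk, ?_⟩
  simp only [SimpleGraph.Walk.length_copy, hw, l1Dist, Nat.dist]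
  omega

lemma dist_eq_l1Dist_of_corner {S : Set (ℕ × ℕ)} {a b c : S}
    (hc : c.1 = (a.1.1, b.1.2)) (hx : a.1.1 ≤ b.1.1) (hy : a.1.2 ≤ b.1.2)
    (hmem : ∀ r : ℕ × ℕ, (r.1 = a.1.1 ∧ a.1.2 ≤ r.2 ∧ r.2 ≤ b.1.2) ∨
      (r.2 = b.1.2 ∧ a.1.1 ≤ r.1 ∧ r.1 ≤ b.1.1) → r ∈ S) :
    (gridGraph.induce S).dist a b = l1Dist a b ∧
      (gridGraph.induce S).dist a c + (gridGraph.induce S).dist c b =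
        (gridGraph.induce S).dist a b := by
  obtain ⟨wac, hac⟩ := exists_walk_vertical (a := a) (c := c) (by rw [hc]) (by rw [hc]; exact hy)
    fun t h₁ h₂ ↦ hmem _ (.inl ⟨rfl, h₁, by rw [hc] at h₂; exact h₂⟩)
  obtain ⟨wcb, hcb⟩ := exists_walk_horizontal (c := c) (b := b) (by rw [hc])
    (by rw [hc]; exact hx) fun t h₁ h₂ ↦ hmem _ (.inr ⟨by rw [hc], by rw [hc] at h₁; exact h₁, h₂⟩)
  have hsplit : l1Dist a c + l1Dist c b = l1Dist a b := by
    simp only [l1Dist, Nat.dist, hc]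
    omega
  have hab := dist_eq_l1Dist_of_length_eq (wac.append wcb)
    (by rw [SimpleGraph.Walk.length_append, hac, hcb, hsplit])
  rw [dist_eq_l1Dist_of_length_eq wac hac, dist_eq_l1Dist_of_length_eq wcb hcb, hab, hsplit]
  exact ⟨rfl, rfl⟩

lemma hgVert_of_le {n ℓ : ℕ} (h₁ : 1 ≤ ℓ) (h : ℓ ≤ n) : hgVert n ℓ = (ℓ, max 1 (ℓ - 1)) := by
  unfold hgVert
  split_ifs with h₂ h₃
  · omega
  · subst h₃; rfl
  · congr; omega

lemma hgVert_of_two_le {n ℓ : ℕ} (h₂ : 2 ≤ ℓ) (h : ℓ ≤ n + 1) :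
    hgVert n ℓ = (min ℓ n, ℓ - 1) := by
  unfold hgVert
  split_ifs with h₃ h₄
  · subst h₃; simp
  · omega
  · congr; omega

theorem stmt_6_general (n i j : ℕ) (h1 : 1 ≤ i) (hij : i < j) (hj : j ≤ n + 1)
    (hih : hgVert n i ∈ halfVert n) (hjh : hgVert n j ∈ halfVert n)
    (hig : hgVert n i ∈ gridVert n) (hjg : hgVert n j ∈ gridVert n)
    (hw : ((i, j - 1) : ℕ × ℕ) ∈ halfVert n) :
    (halfGrid n).dist ⟨hgVert n i, hih⟩ ⟨hgVert n j, hjh⟩ =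
      (fullGrid n).dist ⟨hgVert n i, hig⟩ ⟨hgVert n j, hjg⟩ ∧
    (halfGrid n).dist ⟨hgVert n i, hih⟩ ⟨(i, j - 1), hw⟩ +
      (halfGrid n).dist ⟨(i, j - 1), hw⟩ ⟨hgVert n j, hjh⟩ =
      (halfGrid n).dist ⟨hgVert n i, hih⟩ ⟨hgVert n j, hjh⟩ := by
  have hvi := hgVert_of_le (n := n) h1 (by omega)
  have hvj := hgVert_of_two_le (n := n) (ℓ := j) (by omega) hj
  have hwg : ((i, j - 1) : ℕ × ℕ) ∈ gridVert n := hw.1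
  obtain ⟨hhalf, hcorner⟩ := dist_eq_l1Dist_of_corner (S := halfVert n)
    (a := ⟨_, hih⟩) (b := ⟨_, hjh⟩) (c := ⟨_, hw⟩) (by simp [hvi, hvj])
    (by simp [hvi, hvj]; omega) (by simp [hvi, hvj]; omega)
    fun r hr ↦ by
      simp only [hvi, hvj] at hr
      simp only [halfVert, gridVert, Set.mem_ofPred_eq]
      omega
  obtain ⟨hfull, -⟩ := dist_eq_l1Dist_of_corner (S := gridVert n)
    (a := ⟨_, hig⟩) (b := ⟨_, hjg⟩) (c := ⟨_, hwg⟩) (by simp [hvi, hvj])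
    (by simp [hvi, hvj]; omega) (by simp [hvi, hvj]; omega)
    fun r hr ↦ by
      simp only [hvi, hvj] at hr
      simp only [gridVert, Set.mem_ofPred_eq]
      omega
  exact ⟨hhalf.trans hfull.symm, hcorner⟩

/-- For `n ≥ 2` and `1 ≤ i < j ≤ n+1`, the distance between `v_i` and
`v_j` in `H_n` equals their distance in `P_n □ P_n`, and the vertex `(i, j-1)` lies on
a shortest path in `H_n` from `v_i` to `v_j` (expressed by the additivity of
distances through `(i, j-1)`). -/
theorem stmt_6 (n i j : ℕ) (hn : 2 ≤ n) (h1 : 1 ≤ i) (hij : i < j) (hj : j ≤ n + 1)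
    (hih : hgVert n i ∈ halfVert n) (hjh : hgVert n j ∈ halfVert n)
    (hig : hgVert n i ∈ gridVert n) (hjg : hgVert n j ∈ gridVert n)
    (hw : ((i, j - 1) : ℕ × ℕ) ∈ halfVert n) :
    (halfGrid n).dist ⟨hgVert n i, hih⟩ ⟨hgVert n j, hjh⟩ =
      (fullGrid n).dist ⟨hgVert n i, hig⟩ ⟨hgVert n j, hjg⟩ ∧
    (halfGrid n).dist ⟨hgVert n i, hih⟩ ⟨(i, j - 1), hw⟩ +
      (halfGrid n).dist ⟨(i, j - 1), hw⟩ ⟨hgVert n j, hjh⟩ =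
      (halfGrid n).dist ⟨hgVert n i, hih⟩ ⟨hgVert n j, hjh⟩ :=
  stmt_6_general n i j h1 hij hj hih hjh hig hjg hw
end

section
/- A symmetric map δ : X×X → Υ on a finite set X with |X| ≥ 2 is a symbolic ultrametric if and only if for every strong module M of δ with |M| ≥ 2, the quotient map δ|M / Mmax(δ|M) is complete (equivalently, the modular decomposition tree of δ has no prime vertex). -/
/-!
Both conditions are equivalent to: every `S` with `|S| ≥ 2` has a uniform cut, i.e. a split into
two nonempty parts all of whose cross pairs carry one label `k`.

A symbolic ultrametric has uniform cuts by induction on `|S|`. When `v` is added to a set with a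
cut labelled `k`, either `v` sees one side only through `k`, or (U2) forces all its non-`k`
labels to agree; (U1) then makes `v` together with its non-`k` neighbours one side of a new cut.
Given a cut of `A` labelled `k`, the connected components of the graph of pairs of `A` labelled
`≠ k` are proper strong modules of `δ|A`, so distinct maximal strong modules only see each other
through `k`. Conversely, a cut of `S` is read off the complete quotient of the smallest strong
module containing `S`, and cutting the configurations of (U1) and (U2) shows they cannot occur.
-/

/-- `M` is a module of `δ` relative to the ground set `A`: `M ⊆ A` and all elements
of `M` have the same `δ`-relation to every element of `A ∖ M`.  (For `A = Set.univ`
this is the usual notion of a module of `δ`; for general `A` it is the notion of a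
module of the restriction `δ|A`.) -/
def IsModuleOn {X Υ : Type*} (δ : X → X → Υ) (A M : Set X) : Prop :=
  M ⊆ A ∧ ∀ x ∈ M, ∀ y ∈ M, ∀ z ∈ A \ M, δ x z = δ y z

/-- `M` is a strong module of `δ` relative to the ground set `A`: a module that does
not overlap any other module, i.e. `M ∩ M' ∈ {M, M', ∅}` for every module `M'`. -/
def IsStrongModuleOn {X Υ : Type*} (δ : X → X → Υ) (A M : Set X) : Prop :=
  IsModuleOn δ A M ∧
  ∀ M', IsModuleOn δ A M' → M ∩ M' = M ∨ M ∩ M' = M' ∨ M ∩ M' = ∅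

/-- `Mmax δ A`: the set of inclusion-maximal strong modules of `δ|A` that are proper
subsets of the ground set `A`. -/
def Mmax {X Υ : Type*} (δ : X → X → Υ) (A : Set X) : Set (Set X) :=
  {M | IsStrongModuleOn δ A M ∧ M ≠ A ∧
    ∀ M', IsStrongModuleOn δ A M' → M' ≠ A → M ⊆ M' → M' = M}

/-- The quotient map `δ|A / Mmax(δ|A)` is complete: it assigns the same label to every
pair of distinct elements of `Mmax δ A` (labels being read off via representatives,
which is well-defined for disjoint modules). -/
def QuotientComplete {X Υ : Type*} (δ : X → X → Υ) (A : Set X) : Prop :=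
  ∀ M ∈ Mmax δ A, ∀ N ∈ Mmax δ A, ∀ M' ∈ Mmax δ A, ∀ N' ∈ Mmax δ A,
    M ≠ N → M' ≠ N' →
    ∀ x ∈ M, ∀ y ∈ N, ∀ x' ∈ M', ∀ y' ∈ N', δ x y = δ x' y'

/-- The quotient map `δ|A / Mmax(δ|A)` is prime: every module `𝒮` of the quotient map
(a set of elements of `Mmax δ A` all of whose members have the same quotient label to
each member of `Mmax δ A` outside `𝒮`, labels read off via representatives) is
trivial, i.e. empty, everything, or a singleton. -/
def QuotientPrime {X Υ : Type*} (δ : X → X → Υ) (A : Set X) : Prop :=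
  ∀ 𝒮 ⊆ Mmax δ A,
    (∀ M ∈ 𝒮, ∀ M' ∈ 𝒮, ∀ N ∈ Mmax δ A \ 𝒮,
      ∀ x ∈ M, ∀ x' ∈ M', ∀ z ∈ N, δ x z = δ x' z) →
    𝒮 = ∅ ∨ 𝒮 = Mmax δ A ∨ ∃ M, 𝒮 = {M}

/-- `δ` is a symbolic ultrametric: a symmetric map satisfying
(U1) there is no 4-element subset `{x,y,u,v}` with
`δ(x,y) = δ(y,u) = δ(u,v) ≠ δ(y,v) = δ(x,v) = δ(x,u)`, and
(U2) `|{δ(x,y), δ(x,z), δ(y,z)}| ≤ 2` for all distinct `x, y, z`. -/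
def SymbolicUltrametric {X Υ : Type*} (δ : X → X → Υ) : Prop :=
  (¬ ∃ x y u v : X, x ≠ y ∧ x ≠ u ∧ x ≠ v ∧ y ≠ u ∧ y ≠ v ∧ u ≠ v ∧
      δ x y = δ y u ∧ δ y u = δ u v ∧ δ y v = δ x v ∧ δ x v = δ x u ∧
      δ x y ≠ δ y v) ∧
  (∀ x y z : X, x ≠ y → x ≠ z → y ≠ z →
    ({δ x y, δ x z, δ y z} : Set Υ).ncard ≤ 2)

theorem Set.ncard_triple_le_two_iff {α : Type*} {p q r : α} :
    ({p, q, r} : Set α).ncard ≤ 2 ↔ p = q ∨ p = r ∨ q = r := by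
  constructor
  · intro h
    by_contra! hne
    have := Set.ncard_eq_three.2 ⟨p, q, r, hne.1, hne.2.1, hne.2.2, rfl⟩
    omega
  · have hpair (a b : α) : ({a, b} : Set α).ncard ≤ 2 :=
      (Set.ncard_insert_le a {b}).trans (by simp)
    rintro (rfl | rfl | rfl) <;> simp [hpair]

theorem SimpleGraph.Reachable.mem_of_adj_closed {V : Type*} {G : SimpleGraph V} {S : Set V}
    {u v : V} (h : G.Reachable u v) (hS : ∀ x y, x ∈ S → G.Adj x y → y ∈ S) (hu : u ∈ S) :
    v ∈ S := by
  by_contra hv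
  obtain ⟨p⟩ := h
  obtain ⟨d, -, hd, hd'⟩ := p.exists_boundary_dart S hu hv
  exact hd' (hS _ _ hd d.adj)

namespace SymbolicUltrametric

variable {X Υ : Type*} {δ : X → X → Υ}

theorem triangle (hU : SymbolicUltrametric δ) {x y z : X} (hxy : x ≠ y) (hxz : x ≠ z)
    (hyz : y ≠ z) : δ x y = δ x z ∨ δ x y = δ y z ∨ δ x z = δ y z :=
  Set.ncard_triple_le_two_iff.1 (hU.2 x y z hxy hxz hyz)

theorem label_eq_of_path (hU : SymbolicUltrametric δ) {a v w b : X} {k : Υ} (hav : a ≠ v)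
    (haw : a ≠ w) (hab : a ≠ b) (hvw : v ≠ w) (hvb : v ≠ b) (hav_vw : δ a v = δ v w)
    (hvb_k : δ v b = k) (hab_k : δ a b = k) (haw_k : δ a w = k) (hvw_k : δ v w ≠ k) :
    δ w b = k := by
  have hwb : w ≠ b := by rintro rfl; exact hvw_k hvb_k
  rcases hU.triangle hvw hvb hwb with h | h | h
  · exact absurd (h.trans hvb_k) hvw_k
  · refine absurd ⟨a, v, w, b, hav, haw, hab, hvw, hvb, hwb, hav_vw, h, ?_, ?_, ?_⟩ hU.1
    · rw [hvb_k, hab_k]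
    · rw [hab_k, haw_k]
    · rwa [hav_vw, hvb_k]
  · exact h.symm.trans hvb_k

end SymbolicUltrametric

structure IsUniformCut {X Υ : Type*} (δ : X → X → Υ) (S B : Set X) (k : Υ) : Prop where
  subset : B ⊆ S
  nonempty : B.Nonempty
  diff_nonempty : (S \ B).Nonempty
  label_eq : ∀ x ∈ B, ∀ y ∈ S \ B, δ x y = k

def HasUniformCut {X Υ : Type*} (δ : X → X → Υ) (S : Set X) : Prop :=
  ∃ B k, IsUniformCut δ S B k

namespace IsUniformCut

variable {X Υ : Type*} {δ : X → X → Υ} {S B : Set X} {k : Υ}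

theorem label_eq_of_not_iff (h : IsUniformCut δ S B k) (hsym : ∀ x y : X, x ≠ y → δ x y = δ y x)
    {x y : X} (hx : x ∈ S) (hy : y ∈ S) (hxy : ¬(x ∈ B ↔ y ∈ B)) : δ x y = k := by
  by_cases hxB : x ∈ B
  · exact h.label_eq x hxB y ⟨hy, fun hyB => hxy (iff_of_true hxB hyB)⟩
  · have hyB : y ∈ B := by tauto
    rw [hsym x y (by rintro rfl; exact hxB hyB)]
    exact h.label_eq y hyB x ⟨hx, hxB⟩

theorem exists_not_iff (h : IsUniformCut δ S B k) (x : X) :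
    ∃ y ∈ S, ¬(x ∈ B ↔ y ∈ B) := by
  by_cases hxB : x ∈ B
  · obtain ⟨y, hyS, hyB⟩ := h.diff_nonempty
    exact ⟨y, hyS, by tauto⟩
  · obtain ⟨y, hyB⟩ := h.nonempty
    exact ⟨y, h.subset hyB, by tauto⟩

theorem compl (h : IsUniformCut δ S B k) (hsym : ∀ x y : X, x ≠ y → δ x y = δ y x) :
    IsUniformCut δ S (S \ B) k where
  subset := Set.sdiff_subset
  nonempty := h.diff_nonempty
  diff_nonempty := by rw [Set.sdiff_sdiff_cancel_left h.subset]; exact h.nonempty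
  label_eq x hx y hy := by
    rw [Set.sdiff_sdiff_cancel_left h.subset] at hy
    exact h.label_eq_of_not_iff hsym hx.1 (h.subset hy) fun hxy => hx.2 (hxy.2 hy)

theorem insert_of_forall (h : IsUniformCut δ S B k) (hsym : ∀ x y : X, x ≠ y → δ x y = δ y x)
    {v : X} (hv : v ∉ S) (hvB : ∀ b ∈ B, δ v b = k) : IsUniformCut δ (insert v S) B k where
  subset := h.subset.trans (Set.subset_insert v S)
  nonempty := h.nonempty
  diff_nonempty := ⟨v, Set.mem_insert v S, fun hvB => hv (h.subset hvB)⟩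
  label_eq x hx y hy := by
    obtain ⟨rfl | hyS, hyB⟩ := hy
    · rw [hsym x y (fun hxy => hv (hxy ▸ h.subset hx))]
      exact hvB x hx
    · exact h.label_eq x hx y ⟨hyS, hyB⟩

theorem eq_of_path {p q r s : X} {l : Υ}
    (h : IsUniformCut δ {p, q, r, s} B k) (hsym : ∀ x y : X, x ≠ y → δ x y = δ y x)
    (hpq : δ p q = l) (hqr : δ q r = l) (hrs : δ r s = l) : l = k := by
  obtain ⟨t, ht, hpt⟩ := h.exists_not_iff p
  have hcross : ¬(p ∈ B ↔ q ∈ B) ∨ ¬(q ∈ B ↔ r ∈ B) ∨ ¬(r ∈ B ↔ s ∈ B) := by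
    rcases ht with rfl | rfl | rfl | rfl <;> tauto
  rcases hcross with hc | hc | hc
  · exact hpq.symm.trans (h.label_eq_of_not_iff hsym (by simp) (by simp) hc)
  · exact hqr.symm.trans (h.label_eq_of_not_iff hsym (by simp) (by simp) hc)
  · exact hrs.symm.trans (h.label_eq_of_not_iff hsym (by simp) (by simp) hc)

theorem triangle {x y z : X} (h : IsUniformCut δ {x, y, z} B k)
    (hsym : ∀ x y : X, x ≠ y → δ x y = δ y x) :
    δ x y = δ x z ∨ δ x y = δ y z ∨ δ x z = δ y z := by
  have hk {p q : X} (hp : p ∈ ({x, y, z} : Set X)) (hq : q ∈ ({x, y, z} : Set X))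
      (hpq : ¬(p ∈ B ↔ q ∈ B)) : δ p q = k := h.label_eq_of_not_iff hsym hp hq hpq
  obtain ⟨t, ht, hxt⟩ := h.exists_not_iff x
  by_cases hxy : x ∈ B ↔ y ∈ B <;> by_cases hxz : x ∈ B ↔ z ∈ B
  · rcases ht with rfl | rfl | rfl <;> tauto
  · exact .inr (.inr ((hk (by simp) (by simp) hxz).trans (hk (by simp) (by simp) (by tauto)).symm))
  · exact .inr (.inl ((hk (by simp) (by simp) hxy).trans (hk (by simp) (by simp) (by tauto)).symm))
  · exact .inl ((hk (by simp) (by simp) hxy).trans (hk (by simp) (by simp) hxz).symm)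

end IsUniformCut

section UniformCut

variable {X Υ : Type*} {δ : X → X → Υ} {S D : Set X} {k : Υ}

theorem isUniformCut_pair {a b : X} (hab : a ≠ b) : IsUniformCut δ {a, b} {a} (δ a b) where
  subset := by simp
  nonempty := Set.singleton_nonempty a
  diff_nonempty := ⟨b, by simp [hab.symm]⟩
  label_eq x hx y hy := by
    obtain rfl : x = a := hx
    obtain ⟨rfl | rfl, hyx⟩ := hy
    · exact absurd rfl hyx
    · rfl

theorem isUniformCut_singleton {v : X} {l : Υ} (hv : v ∉ S) (hS : S.Nonempty)
    (hvS : ∀ b ∈ S, δ v b = l) : IsUniformCut δ (insert v S) {v} l where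
  subset := by simp
  nonempty := Set.singleton_nonempty v
  diff_nonempty := by
    obtain ⟨b, hb⟩ := hS
    exact ⟨b, Set.mem_insert_of_mem v hb, fun hbv => hv (hbv ▸ hb)⟩
  label_eq x hx y hy := by
    obtain rfl : x = v := hx
    obtain ⟨rfl | hyS, hyv⟩ := hy
    · exact absurd rfl hyv
    · exact hvS y hyS

theorem isUniformCut_insert_setOf_ne {v b₀ : X} (hv : v ∉ S) (hb₀ : b₀ ∈ S)
    (hb₀k : δ v b₀ = k) (hW : ∀ w ∈ S, δ v w ≠ k → ∀ b ∈ S, δ v b = k → δ w b = k) :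
    IsUniformCut δ (insert v S) (insert v {w ∈ S | δ v w ≠ k}) k where
  subset := Set.insert_subset_insert (Set.sep_subset S _)
  nonempty := Set.insert_nonempty v _
  diff_nonempty := by
    refine ⟨b₀, Set.mem_insert_of_mem v hb₀, ?_⟩
    rintro (rfl | hb₀')
    · exact hv hb₀
    · exact hb₀'.2 hb₀k
  label_eq x hx y hy := by
    obtain ⟨rfl | hyS, hy'⟩ := hy
    · exact absurd (Set.mem_insert y _) hy'
    have hyk : δ v y = k := by
      by_contra hyk
      exact hy' (Set.mem_insert_of_mem v ⟨hyS, hyk⟩)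
    obtain rfl | ⟨hxS, hxk⟩ := hx
    · exact hyk
    · exact hW x hxS hxk y hyS hyk

theorem IsUniformCut.hasUniformCut_insert (hD : IsUniformCut δ S D k) (hU : SymbolicUltrametric δ)
    (hsym : ∀ x y : X, x ≠ y → δ x y = δ y x) {v b₁ b₂ : X} (hv : v ∉ S) (hb₁ : b₁ ∈ D)
    (hb₂ : b₂ ∈ S \ D) (hb₁k : δ v b₁ ≠ k) (hb₂k : δ v b₂ ≠ k) :
    HasUniformCut δ (insert v S) := by
  have hvS {b : X} (hb : b ∈ S) : v ≠ b := fun hvb => hv (hvb ▸ hb)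
  have hacross : ∀ b ∈ S, ∀ c ∈ S, ¬(b ∈ D ↔ c ∈ D) → δ v b ≠ k → δ v c ≠ k →
      δ v b = δ v c := by
    intro b hb c hc hbc hbk hck
    have hk := hD.label_eq_of_not_iff hsym hb hc hbc
    rcases hU.triangle (hvS hb) (hvS hc) (by rintro rfl; exact hbc Iff.rfl) with h | h | h
    · exact h
    · exact absurd (h.trans hk) hbk
    · exact absurd (h.trans hk) hck
  have hopposite : ∀ b ∈ S, ∃ c ∈ S, ¬(b ∈ D ↔ c ∈ D) ∧ δ v c ≠ k := by
    intro b hb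
    by_cases hbD : b ∈ D
    · exact ⟨b₂, hb₂.1, fun h => hb₂.2 (h.1 hbD), hb₂k⟩
    · exact ⟨b₁, hD.subset hb₁, by tauto, hb₁k⟩
  by_cases hall : ∀ b ∈ S, δ v b ≠ k
  · refine ⟨{v}, δ v b₁, isUniformCut_singleton hv ⟨b₁, hD.subset hb₁⟩ fun b hb => ?_⟩
    have hb₁b₂ := hacross b₁ (hD.subset hb₁) b₂ hb₂.1 (fun h => hb₂.2 (h.1 hb₁)) hb₁k hb₂k
    by_cases hbD : b ∈ D
    · exact (hacross b hb b₂ hb₂.1 (fun h => hb₂.2 (h.1 hbD)) (hall b hb) hb₂k).trans hb₁b₂.symm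
    · exact (hacross b₁ (hD.subset hb₁) b hb (fun h => hbD (h.1 hb₁)) hb₁k (hall b hb)).symm
  push Not at hall
  obtain ⟨b₀, hb₀, hb₀k⟩ := hall
  refine ⟨_, k, isUniformCut_insert_setOf_ne hv hb₀ hb₀k fun w hw hwk b hb hbk => ?_⟩
  by_cases hwb : w ∈ D ↔ b ∈ D
  · -- a non-`k` neighbour `a` of `v` across the cut sees both `w` and `b` through `k`
    obtain ⟨a, ha, haw, hak⟩ := hopposite w hw
    have hab : ¬(a ∈ D ↔ b ∈ D) := by tauto
    refine hU.label_eq_of_path (hvS ha).symm (by rintro rfl; exact haw Iff.rfl)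
      (by rintro rfl; exact hab Iff.rfl) (hvS hw) (hvS hb) ?_ hbk
      (hD.label_eq_of_not_iff hsym ha hb hab)
      (hD.label_eq_of_not_iff hsym ha hw fun h => haw h.symm) hwk
    rw [hsym a v (hvS ha).symm]
    exact (hacross w hw a ha haw hwk hak).symm
  · exact hD.label_eq_of_not_iff hsym hw hb hwb

theorem HasUniformCut.insert (hS : HasUniformCut δ S) (hU : SymbolicUltrametric δ)
    (hsym : ∀ x y : X, x ≠ y → δ x y = δ y x) {v : X} (hv : v ∉ S) :
    HasUniformCut δ (insert v S) := by
  obtain ⟨D, k, hD⟩ := hS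
  by_cases h₁ : ∀ b ∈ D, δ v b = k
  · exact ⟨D, k, hD.insert_of_forall hsym hv h₁⟩
  by_cases h₂ : ∀ b ∈ S \ D, δ v b = k
  · exact ⟨S \ D, k, (hD.compl hsym).insert_of_forall hsym hv h₂⟩
  push Not at h₁ h₂
  obtain ⟨b₁, hb₁, hb₁k⟩ := h₁
  obtain ⟨b₂, hb₂, hb₂k⟩ := h₂
  exact hD.hasUniformCut_insert hU hsym hv hb₁ hb₂ hb₁k hb₂k

theorem SymbolicUltrametric.hasUniformCut (hU : SymbolicUltrametric δ)
    (hsym : ∀ x y : X, x ≠ y → δ x y = δ y x) (hS : 2 ≤ S.ncard) :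
    HasUniformCut δ S := by
  induction S, Set.finite_of_ncard_pos (by omega : 0 < S.ncard) using Set.Finite.induction_on
    with
  | empty => simp at hS
  | @insert v S hv hfin ih =>
    rcases le_or_gt 2 S.ncard with h | h
    · exact (ih h).insert hU hsym hv
    · rw [Set.ncard_insert_of_notMem hv hfin] at hS
      obtain ⟨b, rfl⟩ := Set.ncard_eq_one.1 (by omega : S.ncard = 1)
      exact ⟨_, _, isUniformCut_pair fun hvb => hv hvb⟩

theorem symbolicUltrametric_of_forall_hasUniformCut (hsym : ∀ x y : X, x ≠ y → δ x y = δ y x)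
    (h : ∀ S : Set X, 2 ≤ S.ncard → HasUniformCut δ S) : SymbolicUltrametric δ := by
  refine ⟨?_, fun x y z hxy _ _ => ?_⟩
  · rintro ⟨x, y, u, v, hxy, -, hxv, -, -, -, hxy_yu, hyu_uv, hyv_xv, hxv_xu, hne⟩
    obtain ⟨B, k, hB⟩ := h {x, y, u, v} ((Set.one_lt_ncard_iff).2 ⟨x, y, by simp, by simp, hxy⟩)
    -- the two labels of the configuration each form a path through all four points
    have hB' : IsUniformCut δ {y, v, x, u} B k := by
      convert hB using 1
      ext
      simp only [Set.mem_insert_iff, Set.mem_singleton_iff]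
      tauto
    refine hne ((hB.eq_of_path hsym rfl hxy_yu.symm (hyu_uv.symm.trans hxy_yu.symm)).trans
      (hB'.eq_of_path hsym rfl ?_ (hxv_xu.symm.trans hyv_xv.symm)).symm)
    exact (hsym v x hxv.symm).trans hyv_xv.symm
  · obtain ⟨B, k, hB⟩ := h {x, y, z} ((Set.one_lt_ncard_iff).2 ⟨x, y, by simp, by simp, hxy⟩)
    exact Set.ncard_triple_le_two_iff.2 (hB.triangle hsym)

theorem symbolicUltrametric_iff_forall_hasUniformCut
    (hsym : ∀ x y : X, x ≠ y → δ x y = δ y x) :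
    SymbolicUltrametric δ ↔ ∀ S : Set X, 2 ≤ S.ncard → HasUniformCut δ S :=
  ⟨fun hU _ hS => hU.hasUniformCut hsym hS, symbolicUltrametric_of_forall_hasUniformCut hsym⟩

end UniformCut

section Modules

variable {X Υ : Type*} {δ : X → X → Υ} {A : Set X}

theorem isStrongModuleOn_self : IsStrongModuleOn δ A A :=
  ⟨⟨subset_rfl, fun _ _ _ _ _ hz => absurd hz.1 hz.2⟩,
    fun _ hM => Or.inr (Or.inl (Set.inter_eq_right.2 hM.1))⟩

theorem isStrongModuleOn_singleton {x : X} (hx : x ∈ A) : IsStrongModuleOn δ A {x} := by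
  refine ⟨⟨Set.singleton_subset_iff.2 hx, ?_⟩, fun M _ => ?_⟩
  · rintro a rfl b rfl _ -
    rfl
  · by_cases h : x ∈ M
    · exact Or.inl (Set.inter_eq_left.2 (Set.singleton_subset_iff.2 h))
    · exact Or.inr (Or.inr (Set.singleton_inter_eq_empty.2 h))

theorem IsStrongModuleOn.trans {M N : Set X} (hM : IsStrongModuleOn δ A M)
    (hN : IsStrongModuleOn δ M N) : IsStrongModuleOn δ A N := by
  have hNM : N ⊆ M := hN.1.1
  refine ⟨⟨hNM.trans hM.1.1, fun x hx y hy z hz => ?_⟩, fun M' hM' => ?_⟩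
  · by_cases hzM : z ∈ M
    · exact hN.1.2 x hx y hy z ⟨hzM, hz.2⟩
    · exact hM.1.2 x (hNM hx) y (hNM hy) z ⟨hz.1, hzM⟩
  have hK : IsModuleOn δ M (M ∩ M') :=
    ⟨Set.inter_subset_left, fun x hx y hy z hz =>
      hM'.2 x hx.2 y hy.2 z ⟨hM.1.1 hz.1, fun hzM' => hz.2 ⟨hz.1, hzM'⟩⟩⟩
  have hNK : N ∩ (M ∩ M') = N ∩ M' := by
    rw [← Set.inter_assoc, Set.inter_eq_left.2 hNM]
  rcases hN.2 (M ∩ M') hK with h | h | h <;> rw [hNK] at h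
  · exact Or.inl h
  · rcases hM.2 M' hM' with h' | h' | h'
    · have hMN : M ⊆ N := fun x hx => (h.trans h' ▸ hx : x ∈ N ∩ M').1
      rw [h, h', hMN.antisymm hNM]
      exact Or.inl rfl
    · exact Or.inr (Or.inl (h.trans h'))
    · exact Or.inr (Or.inr (h.trans h'))
  · exact Or.inr (Or.inr h)

theorem IsStrongModuleOn.subset_of_mem_Mmax {S P : Set X} (hS : IsStrongModuleOn δ A S)
    (hSA : S ≠ A) (hP : P ∈ Mmax δ A) (hSP : (S ∩ P).Nonempty) : S ⊆ P := by
  rcases hS.2 P hP.1.1 with h | h | h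
  · exact Set.inter_eq_left.1 h
  · exact (hP.2.2 S hS hSA (Set.inter_eq_right.1 h)).le
  · exact absurd h hSP.ne_empty

theorem exists_mem_Mmax [Finite X] {x : X} (hx : x ∈ A) (hxA : {x} ≠ A) :
    ∃ P ∈ Mmax δ A, x ∈ P := by
  obtain ⟨P, hP⟩ := (Set.toFinite {P | IsStrongModuleOn δ A P ∧ P ≠ A ∧ x ∈ P}).exists_maximal
    ⟨{x}, isStrongModuleOn_singleton hx, hxA, rfl⟩
  exact ⟨P, ⟨hP.1.1, hP.1.2.1, fun M hM hMA hPM =>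
    (hP.2 ⟨hM, hMA, hPM hP.1.2.2⟩ hPM).antisymm hPM⟩, hP.1.2.2⟩

end Modules

section Components

variable {X Υ : Type*} {δ : X → X → Υ} {A B : Set X} {k : Υ}

def labelNeGraph (δ : X → X → Υ) (A : Set X) (k : Υ) : SimpleGraph X :=
  SimpleGraph.fromRel fun x y => x ∈ A ∧ y ∈ A ∧ δ x y ≠ k

theorem labelNeGraph_adj (hsym : ∀ x y : X, x ≠ y → δ x y = δ y x) {x y : X} :
    (labelNeGraph δ A k).Adj x y ↔ x ≠ y ∧ x ∈ A ∧ y ∈ A ∧ δ x y ≠ k := by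
  rw [labelNeGraph, SimpleGraph.fromRel_adj]
  constructor
  · rintro ⟨hxy, h | ⟨hy, hx, h⟩⟩
    · exact ⟨hxy, h⟩
    · exact ⟨hxy, hx, hy, hsym x y hxy ▸ h⟩
  · rintro ⟨hxy, h⟩
    exact ⟨hxy, Or.inl h⟩

theorem setOf_reachable_labelNeGraph_subset (hsym : ∀ x y : X, x ≠ y → δ x y = δ y x) {a : X}
    (ha : a ∈ A) : {y | (labelNeGraph δ A k).Reachable a y} ⊆ A :=
  fun _ hy => hy.mem_of_adj_closed (fun _ _ _ hxy => ((labelNeGraph_adj hsym).1 hxy).2.2.1) ha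

theorem isStrongModuleOn_setOf_reachable_labelNeGraph
    (hsym : ∀ x y : X, x ≠ y → δ x y = δ y x) {a : X} (ha : a ∈ A) :
    IsStrongModuleOn δ A {y | (labelNeGraph δ A k).Reachable a y} := by
  set C := {y | (labelNeGraph δ A k).Reachable a y}
  have hCA : C ⊆ A := setOf_reachable_labelNeGraph_subset hsym ha
  have hout : ∀ y ∈ C, ∀ z ∈ A \ C, δ y z = k := by
    intro y hy z hz
    by_contra hyz
    have hadj : (labelNeGraph δ A k).Adj y z :=
      (labelNeGraph_adj hsym).2 ⟨fun h => hz.2 (h ▸ hy), hCA hy, hz.1, hyz⟩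
    exact hz.2 (hy.trans hadj.reachable)
  refine ⟨⟨hCA, fun x hx y hy z hz => (hout x hx z hz).trans (hout y hy z hz).symm⟩,
    fun M hM => ?_⟩
  by_cases hMC : M ⊆ C
  · exact Or.inr (Or.inl (Set.inter_eq_right.2 hMC))
  obtain ⟨c, hcM, hcC⟩ := Set.not_subset.1 hMC
  rcases (C ∩ M).eq_empty_or_nonempty with h | ⟨u, huC, huM⟩
  · exact Or.inr (Or.inr h)
  refine Or.inl (Set.inter_eq_left.2 fun y hy => ?_)
  -- an edge leaving `M` inside `C` would carry the label `δ c · = k`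
  have hclosed : ∀ x y, x ∈ C ∩ M → (labelNeGraph δ A k).Adj x y → y ∈ C ∩ M := by
    rintro x y ⟨hxC, hxM⟩ hxy
    have hyC : y ∈ C := hxC.trans hxy.reachable
    obtain ⟨-, -, hyA, hxy_k⟩ := (labelNeGraph_adj hsym).1 hxy
    refine ⟨hyC, by_contra fun hyM => hxy_k ?_⟩
    rw [hM.2 x hxM c hcM y ⟨hyA, hyM⟩, hsym c y fun h => hcC (h ▸ hyC)]
    exact hout y hyC c ⟨hM.1 hcM, hcC⟩
  exact (huC.symm.trans hy).mem_of_adj_closed hclosed ⟨huC, huM⟩ |>.2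

theorem IsUniformCut.setOf_reachable_labelNeGraph_subset (h : IsUniformCut δ A B k)
    (hsym : ∀ x y : X, x ≠ y → δ x y = δ y x) {a : X} (ha : a ∈ B) :
    {y | (labelNeGraph δ A k).Reachable a y} ⊆ B := by
  refine fun _ hy => hy.mem_of_adj_closed (fun x y hx hxy => ?_) ha
  obtain ⟨-, -, hyA, hxy_k⟩ := (labelNeGraph_adj hsym).1 hxy
  exact by_contra fun hyB => hxy_k (h.label_eq x hx y ⟨hyA, hyB⟩)

theorem IsUniformCut.setOf_reachable_labelNeGraph_ne (h : IsUniformCut δ A B k)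
    (hsym : ∀ x y : X, x ≠ y → δ x y = δ y x) {a : X} (ha : a ∈ A) :
    {y | (labelNeGraph δ A k).Reachable a y} ≠ A := by
  intro hCA
  by_cases haB : a ∈ B
  · obtain ⟨b, hbA, hbB⟩ := h.diff_nonempty
    exact hbB (h.setOf_reachable_labelNeGraph_subset hsym haB (hCA.ge hbA))
  · obtain ⟨b, hbB⟩ := h.nonempty
    exact ((h.compl hsym).setOf_reachable_labelNeGraph_subset hsym ⟨ha, haB⟩
      (hCA.ge (h.subset hbB))).2 hbB

theorem IsUniformCut.quotientComplete (h : IsUniformCut δ A B k)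
    (hsym : ∀ x y : X, x ≠ y → δ x y = δ y x) : QuotientComplete δ A := by
  suffices hk : ∀ M ∈ Mmax δ A, ∀ N ∈ Mmax δ A, M ≠ N → ∀ x ∈ M, ∀ y ∈ N, δ x y = k by
    intro M hM N hN M' hM' N' hN' hMN hMN' x hx y hy x' hx' y' hy'
    rw [hk M hM N hN hMN x hx y hy, hk M' hM' N' hN' hMN' x' hx' y' hy']
  intro M hM N hN hMN x hx y hy
  by_contra hxy_k
  have hyM : y ∈ M := by
    by_cases hxy : x = y
    · exact hxy ▸ hx
    have hxA : x ∈ A := hM.1.1.1 hx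
    have hCM := (isStrongModuleOn_setOf_reachable_labelNeGraph hsym hxA).subset_of_mem_Mmax
      (h.setOf_reachable_labelNeGraph_ne hsym hxA) hM ⟨x, .rfl, hx⟩
    exact hCM ((labelNeGraph_adj hsym).2 ⟨hxy, hxA, hN.1.1.1 hy, hxy_k⟩).reachable
  exact hMN (hN.2.2 M hM.1 hM.2.1 (hN.1.subset_of_mem_Mmax hN.2.1 hM ⟨y, hy, hyM⟩))

theorem HasUniformCut.quotientComplete (h : HasUniformCut δ A)
    (hsym : ∀ x y : X, x ≠ y → δ x y = δ y x) : QuotientComplete δ A :=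
  let ⟨_, _, hB⟩ := h
  hB.quotientComplete hsym

end Components

theorem hasUniformCut_of_forall_quotientComplete {X Υ : Type*} [Finite X] {δ : X → X → Υ}
    (H : ∀ M : Set X, IsStrongModuleOn δ Set.univ M → 2 ≤ M.ncard → QuotientComplete δ M)
    {S : Set X} (hS : 2 ≤ S.ncard) : HasUniformCut δ S := by
  obtain ⟨x, y, hx, hy, hxy⟩ := (Set.one_lt_ncard_iff).1 hS
  -- the cut is read off the top of the smallest strong module containing `S`
  obtain ⟨M, ⟨hM, hSM⟩, hMmin⟩ :=
    (Set.toFinite {M | IsStrongModuleOn δ Set.univ M ∧ S ⊆ M}).exists_minimal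
      ⟨Set.univ, isStrongModuleOn_self, Set.subset_univ S⟩
  have hcomplete := H M hM (hS.trans (Set.ncard_le_ncard hSM))
  have hcover {z : X} (hz : z ∈ S) : ∃ Q ∈ Mmax δ M, z ∈ Q :=
    exists_mem_Mmax (hSM hz) fun h => hxy ((h.ge (hSM hx)).trans (h.ge (hSM hy)).symm)
  obtain ⟨P, hP, hxP⟩ := hcover hx
  obtain ⟨y₀, hy₀S, hy₀P⟩ : (S \ P).Nonempty := by
    refine Set.sdiff_nonempty.2 fun hSP => hP.2.1 ?_
    exact ((hMmin ⟨hM.trans hP.1, hSP⟩ hP.1.1.1).antisymm hP.1.1.1).symm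
  obtain ⟨Q₀, hQ₀, hy₀Q₀⟩ := hcover hy₀S
  refine ⟨S ∩ P, δ x y₀, Set.inter_subset_left, ⟨x, hx, hxP⟩,
    ⟨y₀, hy₀S, fun h => hy₀P h.2⟩, fun x' hx' y' hy' => ?_⟩
  obtain ⟨Q, hQ, hy'Q⟩ := hcover hy'.1
  have hy'P : y' ∉ P := fun h => hy'.2 ⟨hy'.1, h⟩
  exact hcomplete P hP Q hQ P hP Q₀ hQ₀ (by rintro rfl; exact hy'P hy'Q)
    (by rintro rfl; exact hy₀P hy₀Q₀) x' hx'.2 y' hy'Q x hxP y₀ hy₀Q₀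

theorem stmt_13_general {X Υ : Type*} [Fintype X]
    (δ : X → X → Υ) (hsym : ∀ x y : X, x ≠ y → δ x y = δ y x) :
    SymbolicUltrametric δ ↔
      ∀ M : Set X, IsStrongModuleOn δ Set.univ M → 2 ≤ M.ncard →
        QuotientComplete δ M := by
  rw [symbolicUltrametric_iff_forall_hasUniformCut hsym]
  exact ⟨fun h M _ hM => (h M hM).quotientComplete hsym,
    fun H _ hS => hasUniformCut_of_forall_quotientComplete H hS⟩

/-- A symmetric map `δ` on a finite set `X` with `|X| ≥ 2` is a symbolic
ultrametric iff for every strong module `M` of `δ` with `|M| ≥ 2`, the quotient map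
`δ|M / Mmax(δ|M)` is complete (i.e. the modular decomposition tree of `δ` has no prime
vertex). -/
theorem stmt_13 {X Υ : Type*} [Fintype X] (h2 : 2 ≤ Fintype.card X)
    (δ : X → X → Υ) (hsym : ∀ x y : X, x ≠ y → δ x y = δ y x) :
    SymbolicUltrametric δ ↔
      ∀ M : Set X, IsStrongModuleOn δ Set.univ M → 2 ≤ M.ncard →
        QuotientComplete δ M :=
  stmt_13_general δ hsym
end
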